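/- arXiv:1308.6501 — 5 statements merged into one kernel-verified Lean document; each statement's English description precedes it below -/
import Mathlib

section
/- For a vector X = (X^0, X^1, X^2, X^3) ∈ ℝ^4 with X' = (X^1, X^2, X^3) ≠ 0, define X̂ = X/|X'| and g^{αβ}(X) = |X̂|^2_m m^{αβ} − X̂^α X̂^β where m = diag(−1,1,1,1) and |X̂|^2_m = −(X̂^0)^2 + (X̂^1)^2 + (X̂^2)^2 + (X̂^3)^2. Then for all ξ ∈ ℝ^4, g^{αβ}(X) ξ_α ξ_β = −(ξ_0 + T^j ξ_j)^2 + γ^{ij} ξ_i ξ_j, where T^j = X̂^0 X̂^j and γ^{ij} = (1 − (X̂^0)^2)(δ^{ij} − X̂^i X̂^j), with Latin indices summed over 1,2,3. -/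
/-! With `X̂' = X' / |X'|` a unit vector, both sides are polynomials in `X̂^0`, `X̂'` and `ξ`
whose difference is `(|X̂'|² - 1)(|ξ'|² - ξ_0²)`. -/

theorem minkowski_symbol_decomposition_of_unit {R : Type*} [CommRing R]
    (a0 a1 a2 a3 ξ0 ξ1 ξ2 ξ3 : R) (hunit : a1 ^ 2 + a2 ^ 2 + a3 ^ 2 = 1) :
    (-(a0 ^ 2) + a1 ^ 2 + a2 ^ 2 + a3 ^ 2) * (-(ξ0 ^ 2) + ξ1 ^ 2 + ξ2 ^ 2 + ξ3 ^ 2)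
      - (a0 * ξ0 + a1 * ξ1 + a2 * ξ2 + a3 * ξ3) ^ 2
    = -(ξ0 + (a0 * a1) * ξ1 + (a0 * a2) * ξ2 + (a0 * a3) * ξ3) ^ 2
      + (1 - a0 ^ 2) * ((ξ1 ^ 2 + ξ2 ^ 2 + ξ3 ^ 2) - (a1 * ξ1 + a2 * ξ2 + a3 * ξ3) ^ 2) := by
  linear_combination (ξ1 ^ 2 + ξ2 ^ 2 + ξ3 ^ 2 - ξ0 ^ 2) * hunit

theorem div_sqrt_sq_add_sq_add_sq_eq_one {x y z : ℝ} (h : x ^ 2 + y ^ 2 + z ^ 2 ≠ 0) :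
    (x / √(x ^ 2 + y ^ 2 + z ^ 2)) ^ 2 + (y / √(x ^ 2 + y ^ 2 + z ^ 2)) ^ 2
      + (z / √(x ^ 2 + y ^ 2 + z ^ 2)) ^ 2 = 1 := by
  rw [div_pow, div_pow, div_pow, Real.sq_sqrt (by positivity), ← add_div, ← add_div, div_self h]

theorem symbol_decomposition_general
    (X1 X2 X3 : ℝ) (hX : X1 ^ 2 + X2 ^ 2 + X3 ^ 2 ≠ 0)
    (s : ℝ) (hs : s = Real.sqrt (X1 ^ 2 + X2 ^ 2 + X3 ^ 2))
    (hX0 hX1 hX2 hX3 : ℝ)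
    (h1 : hX1 = X1 / s) (h2 : hX2 = X2 / s) (h3 : hX3 = X3 / s)
    (ξ0 ξ1 ξ2 ξ3 : ℝ) :
    (-(hX0 ^ 2) + hX1 ^ 2 + hX2 ^ 2 + hX3 ^ 2) *
        (-(ξ0 ^ 2) + ξ1 ^ 2 + ξ2 ^ 2 + ξ3 ^ 2)
      - (hX0 * ξ0 + hX1 * ξ1 + hX2 * ξ2 + hX3 * ξ3) ^ 2
    = -(ξ0 + (hX0 * hX1) * ξ1 + (hX0 * hX2) * ξ2 + (hX0 * hX3) * ξ3) ^ 2
      + (1 - hX0 ^ 2) *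
        ((ξ1 ^ 2 + ξ2 ^ 2 + ξ3 ^ 2) - (hX1 * ξ1 + hX2 * ξ2 + hX3 * ξ3) ^ 2) := by
  subst hs h1 h2 h3
  exact minkowski_symbol_decomposition_of_unit _ _ _ _ _ _ _ _
    (div_sqrt_sq_add_sq_add_sq_eq_one hX)

/-- Decomposition of the membrane-equation symbol: with `X̂ = X / |X'|`,
`g^{αβ}(X) ξ_α ξ_β = -(ξ_0 + T^j ξ_j)^2 + γ^{ij} ξ_i ξ_j` where `T^j = X̂^0 X̂^j` and
`γ^{ij} = (1 - (X̂^0)^2)(δ^{ij} - X̂^i X̂^j)`. -/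
theorem symbol_decomposition
    (X0 X1 X2 X3 : ℝ) (hX : X1 ^ 2 + X2 ^ 2 + X3 ^ 2 ≠ 0)
    (s : ℝ) (hs : s = Real.sqrt (X1 ^ 2 + X2 ^ 2 + X3 ^ 2))
    (hX0 hX1 hX2 hX3 : ℝ)
    (h0 : hX0 = X0 / s) (h1 : hX1 = X1 / s) (h2 : hX2 = X2 / s) (h3 : hX3 = X3 / s)
    (ξ0 ξ1 ξ2 ξ3 : ℝ) :
    (-(hX0 ^ 2) + hX1 ^ 2 + hX2 ^ 2 + hX3 ^ 2) *
        (-(ξ0 ^ 2) + ξ1 ^ 2 + ξ2 ^ 2 + ξ3 ^ 2)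
      - (hX0 * ξ0 + hX1 * ξ1 + hX2 * ξ2 + hX3 * ξ3) ^ 2
    = -(ξ0 + (hX0 * hX1) * ξ1 + (hX0 * hX2) * ξ2 + (hX0 * hX3) * ξ3) ^ 2
      + (1 - hX0 ^ 2) *
        ((ξ1 ^ 2 + ξ2 ^ 2 + ξ3 ^ 2) - (hX1 * ξ1 + hX2 * ξ2 + hX3 * ξ3) ^ 2) :=
  symbol_decomposition_general X1 X2 X3 hX s hs hX0 hX1 hX2 hX3 h1 h2 h3 ξ0 ξ1 ξ2 ξ3
end

section
/- With γ and T as above and |X̂^0| < 1, for every n ∈ ℝ^3: (1 − |T|^2)(|n|^2 − (T·n/|T|)^2) ≤ γ^{ij} n_i n_j ≤ (|n| − |T·n|)^2, where |T|^2 = Σ_j (T^j)^2 (assuming T ≠ 0 for the left inequality). -/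
/-! Since `T = a u` has `|T| = |a|`, the quantity `T·n/|T|` is `± u·n`, so the lower bound is an
equality. The upper bound is the identity
`(N - bσ)^2 = (1 - b^2)(N^2 - σ^2) + (bN - σ)^2`
taken at `N = |n|`, `b = |a|`, `σ = |u·n|`. -/

theorem sq_mul_div_abs {a : ℝ} (ha : a ≠ 0) (x : ℝ) : (a * x / |a|) ^ 2 = x ^ 2 := by
  have h : |a| ^ 2 ≠ 0 := pow_ne_zero 2 (abs_ne_zero.mpr ha)
  rw [div_pow, mul_pow, ← sq_abs a]
  field_simp

theorem sub_mul_sq_eq_one_sub_sq_mul_add_sq (b N σ : ℝ) :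
    (N - b * σ) ^ 2 = (1 - b ^ 2) * (N ^ 2 - σ ^ 2) + (b * N - σ) ^ 2 := by
  ring

theorem one_sub_sq_mul_sub_sq_le (b N σ : ℝ) :
    (1 - b ^ 2) * (N ^ 2 - σ ^ 2) ≤ (N - b * σ) ^ 2 := by
  rw [sub_mul_sq_eq_one_sub_sq_mul_add_sq]
  exact le_add_of_nonneg_right (sq_nonneg _)

theorem gamma_two_sided_bound_general
    (a u1 u2 u3 n1 n2 n3 : ℝ)
    (ha0 : a ≠ 0) :
    (1 - a ^ 2) *
        ((n1 ^ 2 + n2 ^ 2 + n3 ^ 2)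
          - ((a * u1 * n1 + a * u2 * n2 + a * u3 * n3) / |a|) ^ 2)
      ≤ (1 - a ^ 2) *
          ((n1 ^ 2 + n2 ^ 2 + n3 ^ 2) - (u1 * n1 + u2 * n2 + u3 * n3) ^ 2) ∧
    (1 - a ^ 2) *
        ((n1 ^ 2 + n2 ^ 2 + n3 ^ 2) - (u1 * n1 + u2 * n2 + u3 * n3) ^ 2)
      ≤ (Real.sqrt (n1 ^ 2 + n2 ^ 2 + n3 ^ 2)
          - |a * u1 * n1 + a * u2 * n2 + a * u3 * n3|) ^ 2 := by
  have hT : a * u1 * n1 + a * u2 * n2 + a * u3 * n3 = a * (u1 * n1 + u2 * n2 + u3 * n3) := by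
    ring
  rw [hT, sq_mul_div_abs ha0]
  refine ⟨le_rfl, ?_⟩
  have h := one_sub_sq_mul_sub_sq_le |a| (Real.sqrt (n1 ^ 2 + n2 ^ 2 + n3 ^ 2))
    |u1 * n1 + u2 * n2 + u3 * n3|
  rwa [sq_abs, sq_abs, Real.sq_sqrt (by positivity), ← abs_mul] at h

/-- Two-sided bound for the quadratic form `γ` in terms of `T`: for `|X̂^0| < 1`, `T ≠ 0`,
`(1 - |T|^2)(|n|^2 - (T·n/|T|)^2) ≤ γ^{ij} n_i n_j ≤ (|n| - |T·n|)^2`.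
Here `a = X̂^0`, `(u1,u2,u3) = X̂'` is a unit vector, `T = a·u` so `|T| = |a|`. -/
theorem gamma_two_sided_bound
    (a u1 u2 u3 n1 n2 n3 : ℝ)
    (hu : u1 ^ 2 + u2 ^ 2 + u3 ^ 2 = 1)
    (ha : |a| < 1) (ha0 : a ≠ 0) :
    (1 - a ^ 2) *
        ((n1 ^ 2 + n2 ^ 2 + n3 ^ 2)
          - ((a * u1 * n1 + a * u2 * n2 + a * u3 * n3) / |a|) ^ 2)
      ≤ (1 - a ^ 2) *
          ((n1 ^ 2 + n2 ^ 2 + n3 ^ 2) - (u1 * n1 + u2 * n2 + u3 * n3) ^ 2) ∧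
    (1 - a ^ 2) *
        ((n1 ^ 2 + n2 ^ 2 + n3 ^ 2) - (u1 * n1 + u2 * n2 + u3 * n3) ^ 2)
      ≤ (Real.sqrt (n1 ^ 2 + n2 ^ 2 + n3 ^ 2)
          - |a * u1 * n1 + a * u2 * n2 + a * u3 * n3|) ^ 2 :=
  gamma_two_sided_bound_general a u1 u2 u3 n1 n2 n3 ha0
end

section
/- Let H^{αβ} be the flux quadratic form: for ξ ∈ ℝ^4 and a unit vector n ∈ ℝ^3, H(ξ) = ((ξ_0 + T^j ξ_j)^2 + γ^{ij} ξ_i ξ_j)(1 + T^k n_k) − 2 n_i γ^{ij} ξ_j (ξ_0 + T^k ξ_k). If |T| = |X̂^0| ≤ 1 and γ^{ij} n_i n_j ≤ (1 − |T^k n_k|)^2, then H(ξ) ≥ 0 for all ξ. -/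
/-!
With `T = a u` for a unit vector `u`, the metric `γ(x, y) = (1 - a²)(⟪x, y⟫ - ⟪u, x⟫⟪u, y⟫)` is
`(1 - a²)` times the inner product of the projections of `x` and `y` orthogonal to `u`, hence
positive semidefinite and subject to Cauchy–Schwarz. Writing `s = ξ₀ + T·ξ`, `t = T·n`,
`g = γ(ξ, ξ)` and `c = γ(n, ξ)`, the hypothesis on `γ(n, n)` gives `c² ≤ (1 - |t|)² g`, and
AM–GM then yields `2 c s ≤ (1 - |t|)(s² + g) ≤ (1 + t)(s² + g)`.
-/

open RealInnerProductSpace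

lemma flux_nonneg_of_sq_le {t g s c : ℝ} (ht : |t| ≤ 1) (hg : 0 ≤ g)
    (hc : c ^ 2 ≤ (1 - |t|) ^ 2 * g) :
    0 ≤ (s ^ 2 + g) * (1 + t) - 2 * c * s := by
  set b := 1 - |t|
  have hb0 : 0 ≤ b := by linarith
  have hbt : b ≤ 1 + t := by linarith [neg_abs_le t]
  -- `b² (s² + g) - 2 b c s = (b s - c)² + (b² g - c²)`
  have hbX : 0 ≤ b * (b * (s ^ 2 + g) - 2 * c * s) := by nlinarith [sq_nonneg (b * s - c)]
  have hX : 0 ≤ b * (s ^ 2 + g) - 2 * c * s := by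
    rcases hb0.eq_or_lt with hb0 | hb0
    · have hc0 : c = 0 := by rw [← hb0] at hc; nlinarith [sq_nonneg c]
      simp [hc0, ← hb0]
    · exact nonneg_of_mul_nonneg_right (by linarith) hb0
  nlinarith [mul_le_mul_of_nonneg_right hbt (by positivity : 0 ≤ s ^ 2 + g)]

section InnerProductSpace

variable {E : Type*} [NormedAddCommGroup E] [InnerProductSpace ℝ E] {a : ℝ} {u : E}

def fluxMetric (a : ℝ) (u x y : E) : ℝ := (1 - a ^ 2) * (⟪x, y⟫ - ⟪u, x⟫ * ⟪u, y⟫)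

lemma inner_sub_inner_smul_self (hu : ‖u‖ = 1) (x y : E) :
    ⟪x - ⟪u, x⟫ • u, y - ⟪u, y⟫ • u⟫ = ⟪x, y⟫ - ⟪u, x⟫ * ⟪u, y⟫ := by
  simp only [inner_sub_left, inner_sub_right, real_inner_smul_left, real_inner_smul_right,
    real_inner_self_eq_norm_sq, hu, real_inner_comm x u]
  ring

lemma fluxMetric_self_nonneg (ha : |a| ≤ 1) (hu : ‖u‖ = 1) (x : E) :
    0 ≤ fluxMetric a u x x := by
  rw [fluxMetric, ← inner_sub_inner_smul_self hu]
  exact mul_nonneg (sub_nonneg.mpr ((sq_le_one_iff_abs_le_one a).mpr ha)) real_inner_self_nonneg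

lemma fluxMetric_sq_le (hu : ‖u‖ = 1) (x y : E) :
    fluxMetric a u x y ^ 2 ≤ fluxMetric a u x x * fluxMetric a u y y := by
  have hcs := real_inner_mul_inner_self_le (x - ⟪u, x⟫ • u) (y - ⟪u, y⟫ • u)
  rw [inner_sub_inner_smul_self hu, inner_sub_inner_smul_self hu, inner_sub_inner_smul_self hu,
    ← sq] at hcs
  rw [fluxMetric, fluxMetric, fluxMetric, mul_pow, mul_mul_mul_comm, ← sq]
  exact mul_le_mul_of_nonneg_left hcs (sq_nonneg _)

theorem flux_nonneg_of_fluxMetric_le {n : E} (ha : |a| ≤ 1) (hu : ‖u‖ = 1) (hn : ‖n‖ ≤ 1)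
    (hγn : fluxMetric a u n n ≤ (1 - |a * ⟪u, n⟫|) ^ 2) (s : ℝ) (ξ : E) :
    0 ≤ (s ^ 2 + fluxMetric a u ξ ξ) * (1 + a * ⟪u, n⟫) - 2 * fluxMetric a u n ξ * s := by
  have hun : |⟪u, n⟫| ≤ 1 := (abs_real_inner_le_norm u n).trans (by rwa [hu, one_mul])
  have ht : |a * ⟪u, n⟫| ≤ 1 := by
    rw [abs_mul]
    exact mul_le_one₀ ha (abs_nonneg _) hun
  have hg := fluxMetric_self_nonneg ha hu ξ
  exact flux_nonneg_of_sq_le ht hg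
    ((fluxMetric_sq_le hu n ξ).trans (mul_le_mul_of_nonneg_right hγn hg))

end InnerProductSpace

lemma inner_vec3 (x₀ x₁ x₂ y₀ y₁ y₂ : ℝ) :
    ⟪!₂[x₀, x₁, x₂], !₂[y₀, y₁, y₂]⟫ = x₀ * y₀ + x₁ * y₁ + x₂ * y₂ := by
  simp only [PiLp.inner_apply, RCLike.inner_apply, Real.ringHom_apply, Fin.sum_univ_three,
    Matrix.cons_val_zero, Matrix.cons_val_one, Matrix.cons_val]
  ring

lemma norm_vec3_sq (x₀ x₁ x₂ : ℝ) : ‖!₂[x₀, x₁, x₂]‖ ^ 2 = x₀ ^ 2 + x₁ ^ 2 + x₂ ^ 2 := by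
  simp [EuclideanSpace.norm_sq_eq, Fin.sum_univ_three]

/-- Nonnegativity of the flux quadratic form: with `T^j = a u_j`, `u` a unit vector,
`γ^{ij} = (1 - a^2)(δ^{ij} - u_i u_j)`, a unit vector `n`, `|a| ≤ 1` and
`γ(n,n) ≤ (1 - |T·n|)^2`, the flux form
`H(ξ) = ((ξ_0 + T·ξ)^2 + γ(ξ,ξ))(1 + T·n) - 2 γ(n,ξ)(ξ_0 + T·ξ)` is nonnegative. -/
theorem flux_nonneg
    (a u1 u2 u3 n1 n2 n3 : ℝ)
    (hu : u1 ^ 2 + u2 ^ 2 + u3 ^ 2 = 1)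
    (hn : n1 ^ 2 + n2 ^ 2 + n3 ^ 2 = 1)
    (ha : |a| ≤ 1)
    (hγn : (1 - a ^ 2) * ((n1 ^ 2 + n2 ^ 2 + n3 ^ 2) - (u1 * n1 + u2 * n2 + u3 * n3) ^ 2)
        ≤ (1 - |a * u1 * n1 + a * u2 * n2 + a * u3 * n3|) ^ 2) :
    ∀ ξ0 ξ1 ξ2 ξ3 : ℝ,
      0 ≤ ((ξ0 + a * u1 * ξ1 + a * u2 * ξ2 + a * u3 * ξ3) ^ 2
            + (1 - a ^ 2) *
              ((ξ1 ^ 2 + ξ2 ^ 2 + ξ3 ^ 2) - (u1 * ξ1 + u2 * ξ2 + u3 * ξ3) ^ 2))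
          * (1 + (a * u1 * n1 + a * u2 * n2 + a * u3 * n3))
        - 2 * ((1 - a ^ 2) *
            ((n1 * ξ1 + n2 * ξ2 + n3 * ξ3)
              - (u1 * n1 + u2 * n2 + u3 * n3) * (u1 * ξ1 + u2 * ξ2 + u3 * ξ3)))
          * (ξ0 + a * u1 * ξ1 + a * u2 * ξ2 + a * u3 * ξ3) := by
  intro ξ0 ξ1 ξ2 ξ3
  have hU : ‖!₂[u1, u2, u3]‖ = 1 :=
    (pow_eq_one_iff_of_nonneg (norm_nonneg _) two_ne_zero).mp (by rw [norm_vec3_sq, hu])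
  have hN : ‖!₂[n1, n2, n3]‖ = 1 :=
    (pow_eq_one_iff_of_nonneg (norm_nonneg _) two_ne_zero).mp (by rw [norm_vec3_sq, hn])
  have hγN : fluxMetric a !₂[u1, u2, u3] !₂[n1, n2, n3] !₂[n1, n2, n3]
      ≤ (1 - |a * ⟪!₂[u1, u2, u3], !₂[n1, n2, n3]⟫|) ^ 2 := by
    simp only [fluxMetric, inner_vec3]
    convert hγn using 4 <;> ring
  have key := flux_nonneg_of_fluxMetric_le ha hU hN.le hγN
    (ξ0 + a * u1 * ξ1 + a * u2 * ξ2 + a * u3 * ξ3) !₂[ξ1, ξ2, ξ3]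
  simp only [fluxMetric, inner_vec3] at key
  convert key using 3 <;> ring
end

section
/- Let ψ_t, ψ_z, ψ_θ, r be reals with r > 0, and set M = 1 + ψ_z^2 + ψ_θ^2/r^2, A = (1 + ψ_θ^2/r^2 − ψ_t^2)/M, B = (1 + ψ_z^2 − ψ_t^2)/M, C = ψ_t ψ_z/M, D = ψ_t ψ_θ/(M r), E = ψ_θ ψ_z/(M r). Then M^4[(A + C^2)(B + D^2) − (E − CD)^2] = (1 + ψ_z^2 + ψ_θ^2/r^2)(1 + ψ_θ^2/r^2 + ψ_z^2 − ψ_t^2)^2. In particular if 1 + ψ_θ^2/r^2 + ψ_z^2 − ψ_t^2 > 0, then (A + C^2)(B + D^2) > (E − CD)^2, A + C^2 > 0 and B + D^2 > 0, so the minimal surface equation in cylindrical coordinates is hyperbolic. -/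
/-!
With `p = ψ_θ / r`, `M = 1 + ψ_z² + p²` and `Q = 1 + p² + ψ_z² - ψ_t²`, each of `A + C²`, `B + D²`
and `E - CD` is `Q / M²` times a simple factor (`1 + p²`, `1 + ψ_z²`, `p ψ_z`), so the
discriminant is `Q² / M⁴` times `(1 + p²)(1 + ψ_z²) - p² ψ_z² = M`. Positivity of `Q` then gives
all three inequalities.
-/

namespace CylindricalMinimalSurface

section Field

variable {K : Type*} [Field K] {t z p M A B C D E : K}

theorem sq_mul_A_add_C_sq (hM0 : M ≠ 0) (hM : M = 1 + z ^ 2 + p ^ 2)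
    (hA : A = (1 + p ^ 2 - t ^ 2) / M) (hC : C = t * z / M) :
    M ^ 2 * (A + C ^ 2) = (1 + p ^ 2) * (1 + p ^ 2 + z ^ 2 - t ^ 2) := by
  subst hA hC
  field_simp
  rw [hM]
  ring

theorem sq_mul_B_add_D_sq (hM0 : M ≠ 0) (hM : M = 1 + z ^ 2 + p ^ 2)
    (hB : B = (1 + z ^ 2 - t ^ 2) / M) (hD : D = t * p / M) :
    M ^ 2 * (B + D ^ 2) = (1 + z ^ 2) * (1 + p ^ 2 + z ^ 2 - t ^ 2) := by
  subst hB hD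
  field_simp
  rw [hM]
  ring

theorem sq_mul_E_sub_C_mul_D (hM0 : M ≠ 0) (hM : M = 1 + z ^ 2 + p ^ 2)
    (hC : C = t * z / M) (hD : D = t * p / M) (hE : E = p * z / M) :
    M ^ 2 * (E - C * D) = p * z * (1 + p ^ 2 + z ^ 2 - t ^ 2) := by
  subst hC hD hE
  field_simp
  rw [hM]
  ring

theorem pow_four_mul_discriminant (hM0 : M ≠ 0) (hM : M = 1 + z ^ 2 + p ^ 2)
    (hA : A = (1 + p ^ 2 - t ^ 2) / M) (hB : B = (1 + z ^ 2 - t ^ 2) / M)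
    (hC : C = t * z / M) (hD : D = t * p / M) (hE : E = p * z / M) :
    M ^ 4 * ((A + C ^ 2) * (B + D ^ 2) - (E - C * D) ^ 2)
      = M * (1 + p ^ 2 + z ^ 2 - t ^ 2) ^ 2 := by
  calc M ^ 4 * ((A + C ^ 2) * (B + D ^ 2) - (E - C * D) ^ 2)
      = (M ^ 2 * (A + C ^ 2)) * (M ^ 2 * (B + D ^ 2)) - (M ^ 2 * (E - C * D)) ^ 2 := by ring
    _ = ((1 + p ^ 2) * (1 + z ^ 2) - (p * z) ^ 2) * (1 + p ^ 2 + z ^ 2 - t ^ 2) ^ 2 := by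
      rw [sq_mul_A_add_C_sq hM0 hM hA hC, sq_mul_B_add_D_sq hM0 hM hB hD,
        sq_mul_E_sub_C_mul_D hM0 hM hC hD hE]
      ring
    _ = M * (1 + p ^ 2 + z ^ 2 - t ^ 2) ^ 2 := by rw [hM]; ring

end Field

section Ordered

variable {K : Type*} [Field K] [LinearOrder K] [IsStrictOrderedRing K] {t z p M A B C D E : K}

theorem discriminant_pos (hM : M = 1 + z ^ 2 + p ^ 2)
    (hA : A = (1 + p ^ 2 - t ^ 2) / M) (hB : B = (1 + z ^ 2 - t ^ 2) / M)
    (hC : C = t * z / M) (hD : D = t * p / M) (hE : E = p * z / M)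
    (hQ : 0 < 1 + p ^ 2 + z ^ 2 - t ^ 2) :
    (E - C * D) ^ 2 < (A + C ^ 2) * (B + D ^ 2) ∧ 0 < A + C ^ 2 ∧ 0 < B + D ^ 2 := by
  have hMpos : 0 < M := by rw [hM]; positivity
  have hM0 : M ≠ 0 := hMpos.ne'
  refine ⟨?_, ?_, ?_⟩
  · have h := pow_four_mul_discriminant hM0 hM hA hB hC hD hE
    have : 0 < M ^ 4 * ((A + C ^ 2) * (B + D ^ 2) - (E - C * D) ^ 2) := by
      rw [h]; positivity
    exact sub_pos.mp (pos_of_mul_pos_right this (by positivity))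
  · have h : 0 < M ^ 2 * (A + C ^ 2) := by rw [sq_mul_A_add_C_sq hM0 hM hA hC]; positivity
    exact pos_of_mul_pos_right h (by positivity)
  · have h : 0 < M ^ 2 * (B + D ^ 2) := by rw [sq_mul_B_add_D_sq hM0 hM hB hD]; positivity
    exact pos_of_mul_pos_right h (by positivity)

end Ordered

end CylindricalMinimalSurface

open CylindricalMinimalSurface

theorem cylindrical_hyperbolicity_general
    (ψt ψz ψθ r M A B C D E : ℝ)
    (hM : M = 1 + ψz ^ 2 + ψθ ^ 2 / r ^ 2)
    (hA : A = (1 + ψθ ^ 2 / r ^ 2 - ψt ^ 2) / M)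
    (hB : B = (1 + ψz ^ 2 - ψt ^ 2) / M)
    (hC : C = ψt * ψz / M)
    (hD : D = ψt * ψθ / (M * r))
    (hE : E = ψθ * ψz / (M * r)) :
    M ^ 4 * ((A + C ^ 2) * (B + D ^ 2) - (E - C * D) ^ 2)
        = (1 + ψz ^ 2 + ψθ ^ 2 / r ^ 2) * (1 + ψθ ^ 2 / r ^ 2 + ψz ^ 2 - ψt ^ 2) ^ 2 ∧
      (1 + ψθ ^ 2 / r ^ 2 + ψz ^ 2 - ψt ^ 2 > 0 →
        (A + C ^ 2) * (B + D ^ 2) > (E - C * D) ^ 2 ∧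
          A + C ^ 2 > 0 ∧ B + D ^ 2 > 0) := by
  rw [← div_pow] at hM hA ⊢
  have hD' : D = ψt * (ψθ / r) / M := by rw [hD]; ring
  have hE' : E = ψθ / r * ψz / M := by rw [hE]; ring
  have hM0 : M ≠ 0 := by rw [hM]; positivity
  refine ⟨?_, discriminant_pos hM hA hB hC hD' hE'⟩
  rw [pow_four_mul_discriminant hM0 hM hA hB hC hD' hE', ← hM]

/-- Hyperbolicity of the minimal surface equation in cylindrical coordinates:
the discriminant identity
`M^4 [(A + C^2)(B + D^2) - (E - CD)^2] = (1 + ψ_z^2 + ψ_θ^2/r^2)(1 + ψ_θ^2/r^2 + ψ_z^2 - ψ_t^2)^2`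
and the resulting positivity when `1 + ψ_θ^2/r^2 + ψ_z^2 - ψ_t^2 > 0`. -/
theorem cylindrical_hyperbolicity
    (ψt ψz ψθ r M A B C D E : ℝ) (hr : r > 0)
    (hM : M = 1 + ψz ^ 2 + ψθ ^ 2 / r ^ 2)
    (hA : A = (1 + ψθ ^ 2 / r ^ 2 - ψt ^ 2) / M)
    (hB : B = (1 + ψz ^ 2 - ψt ^ 2) / M)
    (hC : C = ψt * ψz / M)
    (hD : D = ψt * ψθ / (M * r))
    (hE : E = ψθ * ψz / (M * r)) :
    M ^ 4 * ((A + C ^ 2) * (B + D ^ 2) - (E - C * D) ^ 2)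
        = (1 + ψz ^ 2 + ψθ ^ 2 / r ^ 2) * (1 + ψθ ^ 2 / r ^ 2 + ψz ^ 2 - ψt ^ 2) ^ 2 ∧
      (1 + ψθ ^ 2 / r ^ 2 + ψz ^ 2 - ψt ^ 2 > 0 →
        (A + C ^ 2) * (B + D ^ 2) > (E - C * D) ^ 2 ∧
          A + C ^ 2 > 0 ∧ B + D ^ 2 > 0) :=
  cylindrical_hyperbolicity_general ψt ψz ψθ r M A B C D E hM hA hB hC hD hE
end

section
/- If u : [0, T] → ℝ is continuous, nonnegative, and satisfies u(t)^2 ≤ u(0)^2 + ∫_0^t (C n(s) u(s)^2 + 2 u(s) g(s)) ds for all t ∈ [0, T], where n, g are nonnegative continuous functions, then u(t) ≤ exp(∫_0^t C n(s) ds)(u(0) + ∫_0^t g(s) ds) for all t ∈ [0, T]. -/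
/-!
Compare `u` with the barrier `ρ(t) = exp(∫ₐᵗ k) (c + ∫ₐᵗ g)`, `c > u(a)`. Since
`(ρ²)' = 2ρ(kρ + exp(∫ₐᵗ k) g) ≥ kρ² + 2ρg`, the barrier is a supersolution of the integral
inequality. If `u < ρ` on `[a, τ)`, monotonicity of the integrand in `u ≥ 0` gives
`u(τ)² ≤ u(a)² + ∫ₐ^τ (kρ² + 2ρg) ≤ u(a)² + ρ(τ)² - c² < ρ(τ)²`, so `u < ρ` persists up to and
including `τ`; by continuous induction `u < ρ` on all of `[a, b]`. Letting `c ↓ u(a)` gives the bound.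
-/

open Real Set intervalIntegral MeasureTheory

theorem lt_on_Icc_of_continuous_induction {α β : Type*} [ConditionallyCompleteLinearOrder α]
    [TopologicalSpace α] [OrderTopology α] [LinearOrder β] [TopologicalSpace β]
    [OrderClosedTopology β] {a b : α} {f g : α → β}
    (hf : ContinuousOn f (Icc a b)) (hg : ContinuousOn g (Icc a b))
    (step : ∀ τ ∈ Icc a b, (∀ s ∈ Ico a τ, f s < g s) → f τ < g τ) :
    ∀ t ∈ Icc a b, f t < g t := by
  by_contra! hfail
  obtain ⟨t, ht, hgf⟩ := hfail
  set S := {x ∈ Icc a b | g x ≤ f x}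
  have hSbdd : BddBelow S := ⟨a, fun x hx => hx.1.1⟩
  have hτ : sInf S ∈ S := (isClosed_Icc.isClosed_le hg hf).csInf_mem ⟨t, ht, hgf⟩ hSbdd
  refine hτ.2.not_gt (step _ hτ.1 fun s hs => ?_)
  by_contra! hs'
  exact hs.2.not_ge (csInf_le hSbdd ⟨⟨hs.1, hs.2.le.trans hτ.1.2⟩, hs'⟩)

theorem hasDerivAt_integral_of_continuousOn {E : Type*} [NormedAddCommGroup E]
    [NormedSpace ℝ E] [CompleteSpace E] {f : ℝ → E} {a b x : ℝ}
    (hf : ContinuousOn f (Icc a b)) (hx : x ∈ Ioo a b) :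
    HasDerivAt (fun t => ∫ s in a..t, f s) (f x) x := by
  have hsub : uIcc a x ⊆ Icc a b := by
    rw [uIcc_of_le hx.1.le]
    exact Icc_subset_Icc le_rfl hx.2.le
  exact integral_hasDerivAt_right ((hf.mono hsub).intervalIntegrable)
    ((hf.mono Ioo_subset_Icc_self).stronglyMeasurableAtFilter isOpen_Ioo x hx)
    (hf.continuousAt (Icc_mem_nhds hx.1 hx.2))

noncomputable def gronwallBarrier (k g : ℝ → ℝ) (a c t : ℝ) : ℝ :=
  exp (∫ s in a..t, k s) * (c + ∫ s in a..t, g s)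

section Barrier

variable {k g : ℝ → ℝ} {a b c : ℝ}

theorem gronwallBarrier_self : gronwallBarrier k g a c a = c := by
  simp [gronwallBarrier]

theorem continuousOn_gronwallBarrier (hk : ContinuousOn k (Icc a b))
    (hg : ContinuousOn g (Icc a b)) : ContinuousOn (gronwallBarrier k g a c) (Icc a b) := by
  rcases le_total a b with hab | hba
  · have hprim {f : ℝ → ℝ} (hf : ContinuousOn f (Icc a b)) :
        ContinuousOn (fun t => ∫ s in a..t, f s) (Icc a b) := by
      rw [← uIcc_of_le hab] at hf ⊢
      exact continuousOn_primitive_interval hf.integrableOn_uIcc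
    exact ((hprim hk).rexp).mul (continuousOn_const.add (hprim hg))
  · exact (subsingleton_Icc_of_ge hba).continuousOn _

theorem hasDerivAt_gronwallBarrier {x : ℝ} (hk : ContinuousOn k (Icc a b))
    (hg : ContinuousOn g (Icc a b)) (hx : x ∈ Ioo a b) :
    HasDerivAt (gronwallBarrier k g a c)
      (k x * gronwallBarrier k g a c x + exp (∫ s in a..x, k s) * g x) x := by
  have h : HasDerivAt (gronwallBarrier k g a c) (exp (∫ s in a..x, k s) * k x *
      (c + ∫ s in a..x, g s) + exp (∫ s in a..x, k s) * g x) x :=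
    ((hasDerivAt_integral_of_continuousOn hk hx).exp).mul
      ((hasDerivAt_integral_of_continuousOn hg hx).const_add c)
  convert h using 1
  rw [gronwallBarrier]
  ring

theorem gronwallBarrier_nonneg (hg0 : ∀ t ∈ Icc a b, 0 ≤ g t) (hc : 0 ≤ c) {t : ℝ} (ht : t ∈ Icc a b) :
    0 ≤ gronwallBarrier k g a c t := by
  have hG : 0 ≤ ∫ s in a..t, g s :=
    integral_nonneg ht.1 fun s hs => hg0 s ⟨hs.1, hs.2.trans ht.2⟩
  exact mul_nonneg (exp_pos _).le (by linarith)

theorem integral_le_sq_gronwallBarrier_sub (hab : a ≤ b) (hk : ContinuousOn k (Icc a b))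
    (hg : ContinuousOn g (Icc a b)) (hk0 : ∀ t ∈ Icc a b, 0 ≤ k t)
    (hg0 : ∀ t ∈ Icc a b, 0 ≤ g t) (hc : 0 ≤ c) :
    ∫ s in a..b, (k s * gronwallBarrier k g a c s ^ 2 + 2 * gronwallBarrier k g a c s * g s)
      ≤ gronwallBarrier k g a c b ^ 2 - gronwallBarrier k g a c a ^ 2 := by
  set ρ := gronwallBarrier k g a c
  have hρ : ContinuousOn ρ (Icc a b) := continuousOn_gronwallBarrier hk hg
  refine integral_le_sub_of_hasDeriv_right_of_le hab (hρ.pow 2)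
    (fun x hx => ((hasDerivAt_gronwallBarrier hk hg hx).pow 2).hasDerivWithinAt)
    ((hk.mul (hρ.pow 2)).add ((continuousOn_const.mul hρ).mul hg)).integrableOn_Icc
    fun x hx => ?_
  have hx' : x ∈ Icc a b := Ioo_subset_Icc_self hx
  have hρ0 : 0 ≤ ρ x := gronwallBarrier_nonneg hg0 hc hx'
  have hexp : 1 ≤ exp (∫ s in a..x, k s) :=
    one_le_exp (integral_nonneg hx'.1 fun s hs => hk0 s ⟨hs.1, hs.2.trans hx'.2⟩)
  have hkρ : 0 ≤ k x * ρ x ^ 2 := mul_nonneg (hk0 x hx') (sq_nonneg _)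
  push_cast
  nlinarith [mul_nonneg (mul_nonneg hρ0 (hg0 x hx')) (sub_nonneg.2 hexp)]

end Barrier

theorem integral_energy_mono {k g u v : ℝ → ℝ} {a b : ℝ} (hab : a ≤ b)
    (hk : ContinuousOn k (Icc a b)) (hg : ContinuousOn g (Icc a b))
    (hu : ContinuousOn u (Icc a b)) (hv : ContinuousOn v (Icc a b))
    (hk0 : ∀ t ∈ Icc a b, 0 ≤ k t) (hg0 : ∀ t ∈ Icc a b, 0 ≤ g t)
    (hu0 : ∀ t ∈ Icc a b, 0 ≤ u t) (huv : ∀ t ∈ Ioo a b, u t ≤ v t) :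
    ∫ s in a..b, (k s * u s ^ 2 + 2 * u s * g s)
      ≤ ∫ s in a..b, (k s * v s ^ 2 + 2 * v s * g s) := by
  refine integral_mono_on_of_le_Ioo hab
    (((hk.mul (hu.pow 2)).add ((continuousOn_const.mul hu).mul hg)).intervalIntegrable_of_Icc hab)
    (((hk.mul (hv.pow 2)).add ((continuousOn_const.mul hv).mul hg)).intervalIntegrable_of_Icc hab)
    fun s hs => ?_
  have hs' : s ∈ Icc a b := Ioo_subset_Icc_self hs
  gcongr
  exacts [hk0 s hs', hu0 s hs', huv s hs, hg0 s hs', huv s hs]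

theorem lt_gronwallBarrier_of_sq_le {k g u : ℝ → ℝ} {a b c : ℝ}
    (hk : ContinuousOn k (Icc a b)) (hg : ContinuousOn g (Icc a b))
    (hu : ContinuousOn u (Icc a b)) (hk0 : ∀ t ∈ Icc a b, 0 ≤ k t)
    (hg0 : ∀ t ∈ Icc a b, 0 ≤ g t) (hu0 : ∀ t ∈ Icc a b, 0 ≤ u t)
    (hineq : ∀ t ∈ Icc a b, u t ^ 2 ≤ u a ^ 2 + ∫ s in a..t, (k s * u s ^ 2 + 2 * u s * g s))
    (hc : u a < c) :
    ∀ t ∈ Icc a b, u t < gronwallBarrier k g a c t := by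
  have hρ : ContinuousOn (gronwallBarrier k g a c) (Icc a b) := continuousOn_gronwallBarrier hk hg
  refine lt_on_Icc_of_continuous_induction hu hρ fun τ hτ hlt => ?_
  have hsub : Icc a τ ⊆ Icc a b := Icc_subset_Icc le_rfl hτ.2
  have hua : 0 ≤ u a := hu0 a ⟨le_rfl, hτ.1.trans hτ.2⟩
  have hmono := integral_energy_mono hτ.1 (hk.mono hsub) (hg.mono hsub) (hu.mono hsub)
    (hρ.mono hsub) (fun s hs => hk0 s (hsub hs)) (fun s hs => hg0 s (hsub hs))
    (fun s hs => hu0 s (hsub hs)) fun s hs => (hlt s (Ioo_subset_Ico_self hs)).le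
  have hsuper := integral_le_sq_gronwallBarrier_sub hτ.1 (hk.mono hsub) (hg.mono hsub)
    (fun s hs => hk0 s (hsub hs)) (fun s hs => hg0 s (hsub hs)) (hua.trans hc.le)
  rw [gronwallBarrier_self] at hsuper
  refine lt_of_pow_lt_pow_left₀ 2 (gronwallBarrier_nonneg hg0 (hua.trans hc.le) hτ) ?_
  nlinarith [hineq τ hτ]

theorem gronwall_energy_general
    (T C : ℝ) (hC : 0 ≤ C)
    (u n g : ℝ → ℝ)
    (hu : ContinuousOn u (Set.Icc 0 T))
    (hn : ContinuousOn n (Set.Icc 0 T))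
    (hg : ContinuousOn g (Set.Icc 0 T))
    (hu0 : ∀ t ∈ Set.Icc 0 T, 0 ≤ u t)
    (hn0 : ∀ t ∈ Set.Icc 0 T, 0 ≤ n t)
    (hg0 : ∀ t ∈ Set.Icc 0 T, 0 ≤ g t)
    (hineq : ∀ t ∈ Set.Icc 0 T,
      u t ^ 2 ≤ u 0 ^ 2 + ∫ s in (0 : ℝ)..t, (C * n s * u s ^ 2 + 2 * u s * g s)) :
    ∀ t ∈ Set.Icc 0 T,
      u t ≤ Real.exp (∫ s in (0 : ℝ)..t, C * n s) * (u 0 + ∫ s in (0 : ℝ)..t, g s) := by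
  intro t ht
  set E := exp (∫ s in (0 : ℝ)..t, C * n s)
  have hE : 0 < E := exp_pos _
  refine le_of_forall_pos_lt_add fun δ hδ => ?_
  have hbarrier := lt_gronwallBarrier_of_sq_le (k := fun s => C * n s)
    (continuousOn_const.mul hn) hg hu (fun s hs => mul_nonneg hC (hn0 s hs)) hg0 hu0 hineq
    (lt_add_of_pos_right (u 0) (div_pos hδ hE)) t ht
  calc u t < gronwallBarrier (fun s => C * n s) g 0 (u 0 + δ / E) t := hbarrier
    _ = E * (u 0 + ∫ s in (0 : ℝ)..t, g s) + δ := by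
      rw [gronwallBarrier]
      field_simp
      ring

/-- Grönwall-type lemma used to close the energy estimate: if `u ≥ 0` satisfies
`u(t)^2 ≤ u(0)^2 + ∫_0^t (C n(s) u(s)^2 + 2 u(s) g(s)) ds` on `[0, T]` with `n, g ≥ 0`
continuous, then `u(t) ≤ exp(∫_0^t C n(s) ds)(u(0) + ∫_0^t g(s) ds)`. -/
theorem gronwall_energy
    (T C : ℝ) (hT : 0 ≤ T) (hC : 0 ≤ C)
    (u n g : ℝ → ℝ)
    (hu : ContinuousOn u (Set.Icc 0 T))
    (hn : ContinuousOn n (Set.Icc 0 T))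
    (hg : ContinuousOn g (Set.Icc 0 T))
    (hu0 : ∀ t ∈ Set.Icc 0 T, 0 ≤ u t)
    (hn0 : ∀ t ∈ Set.Icc 0 T, 0 ≤ n t)
    (hg0 : ∀ t ∈ Set.Icc 0 T, 0 ≤ g t)
    (hineq : ∀ t ∈ Set.Icc 0 T,
      u t ^ 2 ≤ u 0 ^ 2 + ∫ s in (0 : ℝ)..t, (C * n s * u s ^ 2 + 2 * u s * g s)) :
    ∀ t ∈ Set.Icc 0 T,
      u t ≤ Real.exp (∫ s in (0 : ℝ)..t, C * n s) * (u 0 + ∫ s in (0 : ℝ)..t, g s) :=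
  gronwall_energy_general T C hC u n g hu hn hg hu0 hn0 hg0 hineq
end
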